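/- Let α, β, δ, ζ ∈ ℂ and let F(x,y) = (y + αx⁴)(y + βx⁴)² + δx²y + βδx⁶ + ζ. For all x, y ∈ ℂ with x ≠ 0 and x²y + βx⁶ ≠ 0, setting ξ = 1/x and λ = 1/(x²y + βx⁶), one has the identity λ³·F(x,y) = ξ⁶ + ζλ³ + δλ² + (α−β)λ. In particular F(x,y) = 0 if and only if ξ⁶ + ζλ³ + δλ² + (α−β)λ = 0. -/
import Mathlib


/-- the curve (y+αx⁴)(y+βx⁴)² + δx²y + βδx⁶ + ζ = 0 as a sixfold
cyclic cover: with ξ = 1/x and λ = 1/(x²y + βx⁶) one has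
λ³·F(x,y) = ξ⁶ + ζλ³ + δλ² + (α−β)λ, hence F(x,y) = 0 iff the latter vanishes. -/
theorem sixfold_cover_identity (α β δ ζ : ℂ) (x y : ℂ)
    (hx : x ≠ 0) (hs : x ^ 2 * y + β * x ^ 6 ≠ 0) :
    (1 / (x ^ 2 * y + β * x ^ 6)) ^ 3 *
        ((y + α * x ^ 4) * (y + β * x ^ 4) ^ 2 + δ * x ^ 2 * y + β * δ * x ^ 6 + ζ) =
      (1 / x) ^ 6 + ζ * (1 / (x ^ 2 * y + β * x ^ 6)) ^ 3
        + δ * (1 / (x ^ 2 * y + β * x ^ 6)) ^ 2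
        + (α - β) * (1 / (x ^ 2 * y + β * x ^ 6)) ∧
    ((y + α * x ^ 4) * (y + β * x ^ 4) ^ 2 + δ * x ^ 2 * y + β * δ * x ^ 6 + ζ = 0 ↔
      (1 / x) ^ 6 + ζ * (1 / (x ^ 2 * y + β * x ^ 6)) ^ 3
        + δ * (1 / (x ^ 2 * y + β * x ^ 6)) ^ 2
        + (α - β) * (1 / (x ^ 2 * y + β * x ^ 6)) = 0) := by
  set s : ℂ := x ^ 2 * y + β * x ^ 6 with hsdef
  have hkey : s = x ^ 2 * (y + β * x ^ 4) := by rw [hsdef]; ring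
  have h1 : (1 / s) ^ 3 *
        ((y + α * x ^ 4) * (y + β * x ^ 4) ^ 2 + δ * x ^ 2 * y + β * δ * x ^ 6 + ζ) =
      (1 / x) ^ 6 + ζ * (1 / s) ^ 3 + δ * (1 / s) ^ 2 + (α - β) * (1 / s) := by
    have hs3 : s ^ 3 ≠ 0 := pow_ne_zero _ hs
    have hx6 : x ^ 6 ≠ 0 := pow_ne_zero _ hx
    have hsx : s ^ 3 * x ^ 6 ≠ 0 := mul_ne_zero hs3 hx6
    apply mul_left_cancel₀ hsx
    have e1 : (1 : ℂ) / s = s⁻¹ := one_div s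
    have e2 : (1 : ℂ) / x = x⁻¹ := one_div x
    rw [e1, e2]
    field_simp
    rw [hkey]; ring
  refine ⟨h1, ?_⟩
  rw [← h1]
  constructor
  · intro h; rw [h]; ring
  · intro h
    have h3 : (1 / s) ^ 3 ≠ 0 := pow_ne_zero _ (one_div_ne_zero hs)
    exact (mul_eq_zero.mp h).resolve_left h3
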